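/- arXiv:2412.21145 — 5 statements merged into one kernel-verified Lean document; each statement's English description precedes it below -/
import Mathlib

section
/- A finite word u is a concatenation of two palindromes (one possibly empty) if and only if u is a rotation of its reversal. -/
/-- A word is a concatenation of two palindromes (possibly empty) iff it is a
rotation of its reversal. -/
theorem concat_two_palindromes_iff_rotation_of_reverse {α : Type*} (u : List α) :
    (∃ p q : List α, p.Palindrome ∧ q.Palindrome ∧ u = p ++ q) ↔
    (∃ x y : List α, u.reverse = x ++ y ∧ u = y ++ x) := by
  constructor
  · rintro ⟨p, q, hp, hq, rfl⟩
    exact ⟨q, p, by rw [List.reverse_append, hp.reverse_eq, hq.reverse_eq], rfl⟩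
  · rintro ⟨x, y, h1, rfl⟩
    rw [List.reverse_append] at h1
    obtain ⟨hx, hy⟩ := List.append_inj h1 (by simp)
    exact ⟨y, x, List.Palindrome.of_reverse_eq hy, List.Palindrome.of_reverse_eq hx, rfl⟩
end

section
/- Every word of length n over any alphabet contains at most n+1 distinct palindromic factors (including the empty word). -/
/-!
Appending a letter `a` to `w` creates at most one new palindromic factor. A new factor is a
suffix of `w ++ [a]`, and of two palindromic suffixes `p` shorter than `q`, the palindrome `p` is
a suffix, hence also a proper prefix, of the palindrome `q`, so it already occurs in `w`. Only the
longest palindromic suffix can therefore be new, and induction on the length gives the bound.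
-/

namespace List

variable {α : Type*}

theorem IsPrefix.prefix_dropLast_of_length_lt {l₁ l₂ : List α} (h : l₁ <+: l₂)
    (hlt : l₁.length < l₂.length) : l₁ <+: l₂.dropLast := by
  obtain ⟨r, rfl⟩ := h
  have hr : r ≠ [] := by rintro rfl; simp at hlt
  rw [dropLast_append_of_ne_nil hr]
  exact prefix_append _ _

theorem IsSuffix.dropLast {l₁ l₂ : List α} (h : l₁ <:+ l₂) :
    l₁.dropLast <:+ l₂.dropLast := by
  obtain ⟨s, rfl⟩ := h
  rcases eq_or_ne l₁ [] with rfl | hl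
  · exact nil_suffix
  · rw [dropLast_append_of_ne_nil hl]
    exact suffix_append _ _

theorem Palindrome.prefix_of_suffix {p q : List α} (hp : p.Palindrome) (hq : q.Palindrome)
    (h : p <:+ q) : p <+: q := by
  rwa [← reverse_prefix, hp.reverse_eq, hq.reverse_eq] at h

theorem finite_setOf_infix (u : List α) : {p : List α | p <:+: u}.Finite :=
  u.sublists.finite_toSet.subset fun _ hp => mem_sublists.2 hp.sublist

end List

open List

section

variable {α : Type*}

def palindromicFactors (u : List α) : Set (List α) :=
  {p | p <:+: u ∧ p.Palindrome}

theorem palindromicFactors_finite (u : List α) : (palindromicFactors u).Finite :=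
  (finite_setOf_infix u).subset fun _ hp => hp.1

theorem palindromicFactors_nil : palindromicFactors ([] : List α) = {[]} := by
  ext p
  simp only [palindromicFactors, Set.mem_ofPred_eq, infix_nil, Set.mem_singleton_iff,
    and_iff_left_iff_imp]
  rintro rfl
  exact Palindrome.nil

theorem infix_of_palindrome_suffix_concat {w p q : List α} {a : α}
    (hp : p.Palindrome) (hq : q.Palindrome) (hpq : p <:+ q) (hq' : q <:+ w ++ [a])
    (hlt : p.length < q.length) : p <:+: w := by
  have hpre : p <+: q.dropLast := (hp.prefix_of_suffix hq hpq).prefix_dropLast_of_length_lt hlt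
  have hsuf : q.dropLast <:+ w := by simpa using hq'.dropLast
  exact hpre.isInfix.trans hsuf.isInfix

theorem subsingleton_palindromicFactors_concat_sdiff (w : List α) (a : α) :
    (palindromicFactors (w ++ [a]) \ palindromicFactors w).Subsingleton := by
  have suffix_of_mem : ∀ {p}, p ∈ palindromicFactors (w ++ [a]) \ palindromicFactors w →
      p <:+ w ++ [a] := by
    rintro p ⟨⟨hp, hpal⟩, hpw⟩
    exact (infix_concat_iff.1 hp).resolve_right fun h => hpw ⟨h, hpal⟩
  have eq_of_suffix : ∀ {p q}, p ∈ palindromicFactors (w ++ [a]) \ palindromicFactors w →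
      q ∈ palindromicFactors (w ++ [a]) \ palindromicFactors w → p <:+ q → p = q := by
    intro p q hp hq hpq
    refine hpq.eq_of_length (hpq.length_le.antisymm (not_lt.1 fun hlt => hp.2 ⟨?_, hp.1.2⟩))
    exact infix_of_palindrome_suffix_concat hp.1.2 hq.1.2 hpq (suffix_of_mem hq) hlt
  intro p hp q hq
  rcases suffix_or_suffix_of_suffix (suffix_of_mem hp) (suffix_of_mem hq) with h | h
  · exact eq_of_suffix hp hq h
  · exact (eq_of_suffix hq hp h).symm

theorem ncard_palindromicFactors_concat_le (w : List α) (a : α) :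
    (palindromicFactors (w ++ [a])).ncard ≤ (palindromicFactors w).ncard + 1 := by
  calc (palindromicFactors (w ++ [a])).ncard
      ≤ (palindromicFactors (w ++ [a]) \ palindromicFactors w).ncard
        + (palindromicFactors w).ncard :=
        Set.ncard_le_ncard_sdiff_add_ncard _ _ (palindromicFactors_finite w)
    _ ≤ (palindromicFactors w).ncard + 1 := by
        have hs := subsingleton_palindromicFactors_concat_sdiff w a
        have := (Set.ncard_le_one hs.finite).2 fun _ hp _ hq => hs hp hq
        omega

end

/-- Every word of length `n` contains at most `n + 1` distinct palindromic
factors (including the empty word). -/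
theorem palindromic_factors_card_le {α : Type*} (u : List α) :
    {p : List α | p <:+: u ∧ p.Palindrome}.ncard ≤ u.length + 1 := by
  change (palindromicFactors u).ncard ≤ u.length + 1
  induction u using List.reverseRecOn with
  | nil => simp [palindromicFactors_nil]
  | append_singleton w a ih =>
    calc (palindromicFactors (w ++ [a])).ncard ≤ (palindromicFactors w).ncard + 1 :=
          ncard_palindromicFactors_concat_le w a
      _ ≤ (w ++ [a]).length + 1 := by simpa using ih
end

section
/- For every n ≥ 1, the binary words of length 4n+1 whose Pansiot coding is an anti-palindrome are exactly the words of the form 0u0 or 1u1 where u is a word of length 4n−1 whose Pansiot coding is an anti-palindrome; and the binary words of length 4n+3 with this property are exactly those of the form 0u1 or 1u0 where u has length 4n+1 and its Pansiot coding is an anti-palindrome. -/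
/-- A binary word is an anti-palindrome if its reversal differs from it
in every position, i.e., the reversal is the complement. -/
def AntiPalindrome (u : List Bool) : Prop := u.reverse = u.map (fun b => !b)

/-- The Pansiot coding of a binary word: consecutive sums modulo 2. -/
def pansiot (u : List Bool) : List Bool := List.zipWith xor u u.tail

lemma anti_cons_append (a d : Bool) (w : List Bool) :
    AntiPalindrome (a :: w ++ [d]) ↔ d = !a ∧ AntiPalindrome w := by
  unfold AntiPalindrome
  simp only [List.cons_append, List.reverse_cons, List.reverse_append,
    List.reverse_cons, List.reverse_nil, List.nil_append, List.map_cons,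
    List.map_append, List.map_cons, List.map_nil]
  constructor
  · rintro h
    rw [List.cons_eq_cons] at h
    obtain ⟨h1, h2⟩ := h
    have := List.append_inj' h2 (by simp)
    obtain ⟨h3, h4⟩ := this
    exact ⟨h1, h3⟩
  · rintro ⟨h1, h2⟩
    subst h1
    simp [h2]

lemma pansiot_cons (b h : Bool) (t : List Bool) :
    pansiot (b :: h :: t) = xor b h :: pansiot (h :: t) := rfl

lemma pansiot_concat (h c : Bool) (l : List Bool) :
    pansiot ((h :: l) ++ [c]) = pansiot (h :: l) ++ [xor ((h::l).getLast (by simp)) c] := by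
  induction l generalizing h with
  | nil => simp [pansiot]
  | cons a t ih =>
    have : ((h :: a :: t) ++ [c]) = h :: ((a :: t) ++ [c]) := rfl
    rw [this, show (h :: (a :: t ++ [c])) = h :: a :: (t ++ [c]) from rfl,
      pansiot_cons, show (a :: (t ++ [c])) = (a :: t) ++ [c] from rfl, ih, pansiot_cons]
    simp

lemma foldr_xor (c : Bool) (w : List Bool) :
    w.foldr xor c = xor (w.foldr xor false) c := by
  induction w with
  | nil => simp
  | cons a t ih => simp [ih, Bool.xor_assoc]

lemma pansiot_sum (h : Bool) (l : List Bool) :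
    (pansiot (h :: l)).foldr xor false = xor h ((h::l).getLast (by simp)) := by
  induction l generalizing h with
  | nil => simp [pansiot]
  | cons a t ih =>
    rw [pansiot_cons]
    simp only [List.foldr_cons, ih a]
    simp [Bool.xor_assoc]

lemma pansiot_length (h : Bool) (l : List Bool) :
    (pansiot (h :: l)).length = l.length := by
  simp [pansiot]

lemma decomp (v : List Bool) (hv : 2 ≤ v.length) :
    ∃ (b c : Bool) (u : List Bool), v = b :: u ++ [c] ∧ u.length = v.length - 2 := by
  match v with
  | [] => simp at hv
  | b :: t =>
    have ht : t ≠ [] := by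
      intro h; subst h; simp at hv
    refine ⟨b, t.getLast ht, t.dropLast, ?_, ?_⟩
    · rw [List.cons_append]
      congr 1
      exact (List.dropLast_append_getLast ht).symm
    · simp [List.length_dropLast]

lemma anti_sum : ∀ (k : ℕ) (z : List Bool), z.length = 2*k → AntiPalindrome z →
    z.foldr xor false = decide (k % 2 = 1) := by
  intro k
  induction k with
  | zero =>
    intro z hz _
    have : z = [] := List.eq_nil_of_length_eq_zero (by omega)
    simp [this]
  | succ k ih =>
    intro z hz ha
    obtain ⟨a, d, w, rfl, hw⟩ := decomp z (by omega)
    rw [anti_cons_append] at ha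
    obtain ⟨rfl, haw⟩ := ha
    have hwlen : w.length = 2 * k := by simp at hz ⊢; omega
    have hs := ih w hwlen haw
    simp only [List.cons_append, List.foldr_cons, List.foldr_append, List.foldr_cons,
      List.foldr_nil, Bool.xor_false]
    rw [foldr_xor, hs]
    rcases Nat.mod_two_eq_zero_or_one k with h | h <;>
      simp [h, show (k+1) % 2 = 1 - k % 2 by omega]

lemma bool_swap (b c h L : Bool) : (xor L c = !(xor b h)) ↔ (xor b c = !(xor h L)) := by
  cases b <;> cases c <;> cases h <;> cases L <;> simp

lemma key (b c h : Bool) (l : List Bool) :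
    AntiPalindrome (pansiot (b :: (h :: l) ++ [c])) ↔
      AntiPalindrome (pansiot (h :: l)) ∧
        xor b c = !(xor h ((h::l).getLast (by simp))) := by
  have e1 : (b :: (h :: l) ++ [c]) = b :: h :: (l ++ [c]) := rfl
  have e2 : (h :: (l ++ [c])) = (h :: l) ++ [c] := rfl
  rw [e1, pansiot_cons, e2, pansiot_concat,
    show xor b h :: (pansiot (h::l) ++ [xor ((h::l).getLast (by simp)) c])
      = (xor b h :: pansiot (h::l)) ++ [xor ((h::l).getLast (by simp)) c] from rfl]
  rw [show (xor b h :: pansiot (h::l)) ++ [xor ((h::l).getLast (by simp)) c]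
      = xor b h :: pansiot (h::l) ++ [xor ((h::l).getLast (by simp)) c] from rfl,
    anti_cons_append, bool_swap]
  exact and_comm

lemma headLast (m : ℕ) (h : Bool) (l : List Bool) (hl : l.length = 2*m)
    (ha : AntiPalindrome (pansiot (h :: l))) :
    xor h ((h::l).getLast (by simp)) = decide (m % 2 = 1) := by
  rw [← pansiot_sum]
  exact anti_sum m _ (by rw [pansiot_length, hl]) ha

lemma master (m : ℕ) (v : List Bool) (hv : v.length = 2*m + 3) :
    AntiPalindrome (pansiot v) ↔
      ∃ (b : Bool) (u : List Bool), u.length = 2*m+1 ∧ AntiPalindrome (pansiot u) ∧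
        v = b :: (u ++ [xor b (decide (m % 2 = 0))]) := by
  obtain ⟨b, c, u, rfl, hu⟩ := decomp v (by omega)
  have hu' : u.length = 2*m+1 := by
    simp only [List.cons_append, List.length_cons, List.length_append,
      List.length_cons, List.length_nil] at hv
    omega
  obtain ⟨h, l, rfl⟩ : ∃ h l, u = h :: l := by
    cases u with
    | nil => simp at hu'
    | cons h l => exact ⟨h, l, rfl⟩
  rw [key]
  constructor
  · rintro ⟨ha, hx⟩
    have hL := headLast m h l (by simpa using hu') ha
    refine ⟨b, h::l, hu', ha, ?_⟩
    have hc : c = xor b (decide (m % 2 = 0)) := by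
      rw [hL] at hx
      rcases Nat.mod_two_eq_zero_or_one m with hm | hm <;>
        rw [hm] at hx ⊢ <;> revert hx <;> cases b <;> cases c <;> decide
    rw [hc]; rfl
  · rintro ⟨b', u', hlen, ha, heq⟩
    rw [List.cons_append, List.cons_eq_cons] at heq
    obtain ⟨rfl, heq2⟩ := heq
    obtain ⟨h3, h4⟩ := List.append_inj heq2 (by rw [hu', hlen])
    rw [← h3] at ha
    have hc : c = xor b (decide (m % 2 = 0)) := by
      simpa using h4
    have hL := headLast m h l (by simpa using hu') ha
    refine ⟨ha, ?_⟩
    rw [hL, hc]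
    rcases Nat.mod_two_eq_zero_or_one m with hm | hm <;>
      rw [hm] <;> cases b <;> decide


/-- Recursive description of Pansiot pre-antipalindromes: for `n ≥ 1`, those of
length `4n+1` are exactly the words `0u0` or `1u1` with `u` a Pansiot
pre-antipalindrome of length `4n-1`, and those of length `4n+3` are exactly the
words `0u1` or `1u0` with `u` a Pansiot pre-antipalindrome of length `4n+1`. -/
theorem pansiot_preantipalindromes_recursion (n : ℕ) (hn : 1 ≤ n) :
    (∀ v : List Bool, v.length = 4 * n + 1 →
      (AntiPalindrome (pansiot v) ↔
        ∃ u : List Bool, u.length = 4 * n - 1 ∧ AntiPalindrome (pansiot u) ∧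
          (v = [false] ++ u ++ [false] ∨ v = [true] ++ u ++ [true]))) ∧
    (∀ v : List Bool, v.length = 4 * n + 3 →
      (AntiPalindrome (pansiot v) ↔
        ∃ u : List Bool, u.length = 4 * n + 1 ∧ AntiPalindrome (pansiot u) ∧
          (v = [false] ++ u ++ [true] ∨ v = [true] ++ u ++ [false]))) := by
  constructor
  · intro v hv
    rw [master (2*n-1) v (by omega)]
    have hm : (2*n-1) % 2 = 1 := by omega
    simp only [hm]
    constructor
    · rintro ⟨b, u, hlen, ha, rfl⟩
      refine ⟨u, by omega, ha, ?_⟩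
      cases b
      · left; simp
      · right; simp
    · rintro ⟨u, hlen, ha, h | h⟩
      · exact ⟨false, u, by omega, ha, by simp [h]⟩
      · exact ⟨true, u, by omega, ha, by simp [h]⟩
  · intro v hv
    rw [master (2*n) v (by omega)]
    have hm : (2*n) % 2 = 0 := by omega
    simp only [hm]
    constructor
    · rintro ⟨b, u, hlen, ha, rfl⟩
      refine ⟨u, by omega, ha, ?_⟩
      cases b
      · left; simp
      · right; simp
    · rintro ⟨u, hlen, ha, h | h⟩
      · exact ⟨false, u, by omega, ha, by simp [h]⟩
      · exact ⟨true, u, by omega, ha, by simp [h]⟩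
end

section
/- A binary word has at least one rotation (possibly itself) that is an abelian square if and only if it contains an even number of 0s and an even number of 1s. -/
private lemma nat_ivt (f : ℕ → ℕ) (m c : ℕ) (hstep : ∀ i < m, f (i+1) ≤ f i + 1)
    (h0 : f 0 ≤ c) (hm : c ≤ f m) : ∃ i ≤ m, f i = c := by
  induction m with
  | zero => exact ⟨0, le_refl 0, le_antisymm h0 hm⟩
  | succ m ih =>
    by_cases h : c ≤ f m
    · obtain ⟨i, hi, hfi⟩ := ih (fun i hi => hstep i (Nat.lt_succ_of_lt hi)) h
      exact ⟨i, hi.trans (Nat.le_succ m), hfi⟩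
    · push_neg at h
      have h1 := hstep m (Nat.lt_succ_self m)
      exact ⟨m+1, le_refl _, le_antisymm (by omega) hm⟩

private lemma window_step (u : List Bool) (m i : ℕ) (h1 : i + m + 1 ≤ u.length) :
    ((u.drop (i+1)).take m).count true + (if u[i]'(by omega) = true then 1 else 0)
      = ((u.drop i).take m).count true + (if u[i+m]'(by omega) = true then 1 else 0) := by
  cases m with
  | zero => simp
  | succ k =>
    have hi : i < u.length := by omega
    have hd : u.drop i = u[i] :: u.drop (i+1) := List.drop_eq_getElem_cons hi
    have hk : k < (u.drop (i+1)).length := by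
      rw [List.length_drop]; omega
    have hget : (u.drop (i+1))[k]'hk = u[i+(k+1)]'(by omega) := by
      rw [List.getElem_drop]; congr 1; omega
    have hts : (u.drop (i+1)).take (k+1) = (u.drop (i+1)).take k ++ [u[i+(k+1)]'(by omega)] := by
      rw [List.take_succ, List.getElem?_eq_getElem hk, hget]; rfl
    have hrs : ((u.drop i).take (k+1)).count true
        = (if u[i]'hi = true then 1 else 0) + ((u.drop (i+1)).take k).count true := by
      rw [hd, List.take_succ_cons, List.count_cons]
      simp [Nat.add_comm]
    have hls : ((u.drop (i+1)).take (k+1)).count true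
        = ((u.drop (i+1)).take k).count true + (if u[i+(k+1)]'(by omega) = true then 1 else 0) := by
      rw [hts, List.count_append]
      simp [List.count_cons]
    rw [hls, hrs]
    omega

private lemma count_true_add_count_false (v : List Bool) :
    v.count true + v.count false = v.length := by
  induction v with
  | nil => simp
  | cons b w ih => cases b <;> simp [List.count_cons] <;> omega


/-- A word is an abelian square if it is `s ++ t` where `t` is an anagram of `s`. -/
def AbelianSquare (u : List Bool) : Prop :=
  ∃ s t : List Bool, u = s ++ t ∧ s.length = t.length ∧ s.Perm t

/-- A binary word has a rotation that is an abelian square iff it contains an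
even number of 0s and an even number of 1s. -/
theorem rotation_abelian_square_iff (u : List Bool) :
    (∃ x y : List Bool, u = x ++ y ∧ AbelianSquare (y ++ x)) ↔
    (Even (u.count false) ∧ Even (u.count true)) := by
  constructor
  · rintro ⟨x, y, hu, s, t, hst, hlen, hperm⟩
    have key : ∀ c : Bool, u.count c = s.count c + s.count c := by
      intro c
      have h1 : (y ++ x).count c = s.count c + t.count c := by
        rw [hst, List.count_append]
      rw [List.count_append] at h1
      have h2 := hperm.count_eq c
      rw [hu, List.count_append]
      omega
    exact ⟨⟨s.count false, key false⟩, ⟨s.count true, key true⟩⟩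
  · rintro ⟨⟨a, ha⟩, ⟨k, hk⟩⟩
    set m := a + k with hm
    have hlen : u.length = 2 * m := by
      have := count_true_add_count_false u
      omega
    set f : ℕ → ℕ := fun i => ((u.drop i).take m).count true with hf
    have hstep : ∀ i, i + m + 1 ≤ u.length → f (i+1) ≤ f i + 1 ∧ f i ≤ f (i+1) + 1 := by
      intro i h
      have hw := window_step u m i h
      have hle : ∀ b : Bool, (if b = true then 1 else 0) ≤ 1 := by
        intro b; cases b <;> simp
      have h1 := hle (u[i]'(by omega))
      have h2 := hle (u[i+m]'(by omega))
      have hw1 : f (i+1) + (if u[i]'(by omega) = true then 1 else 0)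
          = f i + (if u[i+m]'(by omega) = true then 1 else 0) := hw
      constructor <;> omega
    have hf0 : f 0 = (u.take m).count true := by simp [hf]
    have hfm : f m = (u.drop m).count true := by
      have : (u.drop m).take m = u.drop m :=
        List.take_of_length_le (by rw [List.length_drop]; omega)
      simp [hf, this]
    have hsum : f 0 + f m = k + k := by
      have hsplit : u.count true = (u.take m).count true + (u.drop m).count true := by
        conv_lhs => rw [← List.take_append_drop m u]
        rw [List.count_append]
      rw [hf0, hfm]; omega
    have hex : ∃ i ≤ m, f i = k := by
      by_cases hc : f 0 ≤ k
      · exact nat_ivt f m k (fun i hi => (hstep i (by omega)).1) hc (by omega)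
      · obtain ⟨j, hjm, hgj⟩ := nat_ivt (fun j => f (m - j)) m k
          (by
            intro j hj
            have e : m - j = (m - (j+1)) + 1 := by omega
            have h2 := (hstep (m - (j+1)) (by omega)).2
            show f (m - (j+1)) ≤ f (m - j) + 1
            rw [e]
            exact h2)
          (by show f (m - 0) ≤ k; rw [Nat.sub_zero]; omega)
          (by show k ≤ f (m - m); rw [Nat.sub_self]; omega)
        exact ⟨m - j, by omega, hgj⟩
    obtain ⟨i, him, hfi⟩ := hex
    refine ⟨u.take i, u.drop i, (List.take_append_drop i u).symm, ?_⟩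
    set r := u.drop i ++ u.take i with hr
    have hrlen : r.length = 2 * m := by
      rw [hr, List.length_append, List.length_take, List.length_drop]; omega
    have hdroplen : m ≤ (u.drop i).length := by rw [List.length_drop]; omega
    have hrt : r.take m = (u.drop i).take m := List.take_append_of_le_length hdroplen
    have hct : (r.take m).count true = k := by rw [hrt]; exact hfi
    have hrc : ∀ c : Bool, r.count c = u.count c := by
      intro c
      conv_rhs => rw [← List.take_append_drop i u]
      rw [hr, List.count_append, List.count_append]
      omega
    have hsplit2 : (r.take m).count true + (r.drop m).count true = r.count true := by
      conv_rhs => rw [← List.take_append_drop m r]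
      rw [List.count_append]
    have hcdt : (r.drop m).count true = k := by
      have := hrc true
      omega
    have hlt : (r.take m).length = m := by rw [List.length_take]; omega
    have hld : (r.drop m).length = m := by rw [List.length_drop]; omega
    refine ⟨r.take m, r.drop m, (List.take_append_drop m r).symm, by rw [hlt, hld], ?_⟩
    rw [List.perm_iff_count]
    intro c
    have c1 := count_true_add_count_false (r.take m)
    have c2 := count_true_add_count_false (r.drop m)
    cases c
    · omega
    · omega
end

section
/- For every n ≥ 3, the shortest binary word that has exactly n distinct factorizations as a concatenation of two Lyndon words is 00(10)^{n-2}11, which has length 2n. -/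
/-!
A Lyndon word of length at least 2 begins with 0 and ends with 1. Hence if `p` and `p + 1` were
both split points of a factorization of `u` into two Lyndon words, the letter `u[p]` would be
the last letter of the Lyndon prefix of length `p + 1` (so 1) and the first letter of the
Lyndon suffix starting at `p` (so 0). The split points are thus a set of integers in
`(0, |u|)` without two consecutive elements, so `|u| ≥ 2n`. When `|u| = 2n` they must be exactly
the odd positions, and the first/last letter constraints then fix every letter of `u`. The word
`00(10)^{n-2}11 = 0(01)^k · (01)^{n-1-k}1` splits at every odd position `2k + 1`, so it is that
word.
-/

/-- A Lyndon word: nonempty and strictly smaller than each of its proper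
nonempty suffixes in the lexicographic order (with false < true). -/
def LyndonWord (u : List Bool) : Prop :=
  u ≠ [] ∧ ∀ s : List Bool, s <:+ u → s ≠ [] → s ≠ u → u < s

/-- The set of factorizations of `u` into two Lyndon words. -/
def lyndonFacts (u : List Bool) : Set (List Bool × List Bool) :=
  {p | LyndonWord p.1 ∧ LyndonWord p.2 ∧ u = p.1 ++ p.2}

/-- The word 00(10)^{n-2}11. -/
def wordHML (n : ℕ) : List Bool :=
  [false, false] ++ (List.replicate (n - 2) [true, false]).flatten ++ [true, true]

section NoTwoConsecutive

variable {S : Set ℕ} {L : ℕ}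

theorem ncard_union_image_add_one (hS : S ⊆ Set.Ioo 0 L) (h : ∀ p ∈ S, p + 1 ∉ S) :
    (S ∪ (· + 1) '' S).ncard = 2 * S.ncard := by
  have hfin : S.Finite := (Set.finite_Ioo 0 L).subset hS
  rw [Set.ncard_union_eq ?_ hfin (hfin.image _),
    Set.ncard_image_of_injective _ (add_left_injective 1)]
  · ring
  · rw [Set.disjoint_right]
    rintro _ ⟨p, hp, rfl⟩
    exact h p hp

theorem union_image_add_one_subset_Icc (hS : S ⊆ Set.Ioo 0 L) :
    S ∪ (· + 1) '' S ⊆ Set.Icc 1 L := by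
  rintro _ (hp | ⟨p, hp, rfl⟩) <;> have := hS hp <;>
    simp only [Set.mem_Ioo, Set.mem_Icc] at * <;> omega

theorem two_mul_ncard_le_of_add_one_notMem (hS : S ⊆ Set.Ioo 0 L) (h : ∀ p ∈ S, p + 1 ∉ S) :
    2 * S.ncard ≤ L := by
  simpa [ncard_union_image_add_one hS h] using
    Set.ncard_le_ncard (union_image_add_one_subset_Icc hS) (Set.finite_Icc 1 L)

theorem odd_mem_of_two_mul_ncard_eq (hS : S ⊆ Set.Ioo 0 L) (h : ∀ p ∈ S, p + 1 ∉ S)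
    (hcard : 2 * S.ncard = L) {p : ℕ} (hp : Odd p) (hpL : p < L) : p ∈ S := by
  have hcover : S ∪ (· + 1) '' S = Set.Icc 1 L :=
    Set.eq_of_subset_of_ncard_le (union_image_add_one_subset_Icc hS)
      (by simp [ncard_union_image_add_one hS h, hcard]) (Set.finite_Icc 1 L)
  have hmem : ∀ q, 1 ≤ q → q ≤ L → q ∉ S → q - 1 ∈ S := by
    intro q hq1 hqL hq
    have : q ∈ S ∪ (· + 1) '' S := hcover ▸ ⟨hq1, hqL⟩
    rcases this with hq' | ⟨r, hr, rfl⟩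
    · exact absurd hq' hq
    · simpa using hr
  obtain ⟨j, rfl⟩ := hp
  induction j with
  | zero =>
    by_contra h1
    have := hS (hmem 1 le_rfl (by omega) h1)
    simp at this
  | succ j ih =>
    by_contra h1
    have h2 := hmem _ (by omega) (by omega) h1
    exact h _ (ih (by omega)) (by convert h2 using 1; omega)

end NoTwoConsecutive

theorem LyndonWord.lt_singleton_getLast {u : List Bool} (hu : LyndonWord u) (h : 2 ≤ u.length) :
    u < [u.getLast hu.1] := by
  refine hu.2 _ ?_ (List.cons_ne_nil _ _) fun he => ?_
  · exact List.singleton_suffix_iff_getLast?_eq_some.2 (List.getLast?_eq_some_getLast hu.1)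
  · have := congrArg List.length he
    simp only [List.length_singleton] at this
    omega

theorem LyndonWord.getLast_eq_true {u : List Bool} (hu : LyndonWord u) (h : 2 ≤ u.length) :
    u.getLast hu.1 = true := by
  have hlt := hu.lt_singleton_getLast h
  obtain ⟨a, t, rfl⟩ := List.exists_cons_of_ne_nil hu.1
  revert hlt
  generalize (a :: t).getLast hu.1 = b
  cases b <;> simp [List.cons_lt_cons_iff]

theorem LyndonWord.head_eq_false {u : List Bool} (hu : LyndonWord u) (h : 2 ≤ u.length) :
    u.head hu.1 = false := by
  have hlt := hu.lt_singleton_getLast h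
  rw [hu.getLast_eq_true h] at hlt
  obtain ⟨a, t, rfl⟩ := List.exists_cons_of_ne_nil hu.1
  simpa [List.cons_lt_cons_iff, Bool.lt_iff] using hlt

theorem LyndonWord.getElem_zero_eq_false {u : List Bool} (hu : LyndonWord u) (h : 2 ≤ u.length) :
    u[0] = false := by
  rw [← List.head_eq_getElem hu.1]
  exact hu.head_eq_false h

theorem LyndonWord.getElem_eq_true_of_add_one_eq_length {u : List Bool} (hu : LyndonWord u)
    (h : 2 ≤ u.length) {j : ℕ} (hj : j + 1 = u.length) : u[j] = true := by
  obtain rfl : j = u.length - 1 := by omega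
  rw [← List.getLast_eq_getElem hu.1]
  exact hu.getLast_eq_true h

theorem getElem_eq_true_of_lyndonWord_take {u : List Bool} {p : ℕ} (hp : 1 ≤ p)
    (hpu : p < u.length) (h : LyndonWord (u.take (p + 1))) : u[p] = true := by
  simpa using h.getElem_eq_true_of_add_one_eq_length (j := p) (by simp; omega) (by simp; omega)

theorem getElem_eq_false_of_lyndonWord_drop {u : List Bool} {p : ℕ} (hpu : p + 2 ≤ u.length)
    (h : LyndonWord (u.drop p)) : u[p] = false := by
  simpa using h.getElem_zero_eq_false (by simp; omega)

def lyndonSplits (u : List Bool) : Set ℕ :=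
  {p | LyndonWord (u.take p) ∧ LyndonWord (u.drop p)}

theorem lyndonSplits_subset_Ioo (u : List Bool) : lyndonSplits u ⊆ Set.Ioo 0 u.length := by
  rintro p ⟨⟨hl, -⟩, ⟨hr, -⟩⟩
  simp only [ne_eq, List.take_eq_nil_iff, List.drop_eq_nil_iff, not_or, not_le] at hl hr
  exact ⟨Nat.pos_of_ne_zero hl.1, hr⟩

theorem ncard_lyndonFacts (u : List Bool) : (lyndonFacts u).ncard = (lyndonSplits u).ncard := by
  symm
  refine Set.ncard_congr (fun p _ => (u.take p, u.drop p)) ?_ ?_ ?_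
  · rintro p ⟨hl, hr⟩
    exact ⟨hl, hr, (List.take_append_drop p u).symm⟩
  · intro p q hp hq he
    have := congrArg (fun x => x.1.length) he
    have := lyndonSplits_subset_Ioo u hp
    have := lyndonSplits_subset_Ioo u hq
    simp only [List.length_take, Set.mem_Ioo] at *
    omega
  · rintro ⟨s, t⟩ ⟨hs, ht, rfl⟩
    exact ⟨s.length, ⟨by simpa using hs, by simpa using ht⟩, by simp⟩

theorem add_one_notMem_lyndonSplits {u : List Bool} {p : ℕ} (hp : p ∈ lyndonSplits u) :
    p + 1 ∉ lyndonSplits u := by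
  intro hq
  have hp' := lyndonSplits_subset_Ioo u hp
  have hq' := lyndonSplits_subset_Ioo u hq
  simp only [Set.mem_Ioo] at hp' hq'
  have := getElem_eq_true_of_lyndonWord_take (by omega) (by omega) hq.1
  simp [getElem_eq_false_of_lyndonWord_drop (by omega) hp.2] at this

/-- The right-hand side is the letter pattern of `00(10)^{n-2}11` at position `j`. -/
theorem getElem_of_odd_mem_lyndonSplits {u : List Bool} (h4 : 4 ≤ u.length)
    (heven : Even u.length) (hu : ∀ p, Odd p → p < u.length → p ∈ lyndonSplits u)
    (j : ℕ) (hj : j < u.length) : u[j] = decide (j + 1 = u.length ∨ j ≠ 0 ∧ Even j) := by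
  rcases Nat.even_or_odd j with hje | hjo
  · rcases eq_or_ne j 0 with rfl | hj0
    · have := (hu 3 ⟨1, rfl⟩ (by omega)).1.getElem_zero_eq_false (by simp; omega)
      simpa [show 1 ≠ u.length by omega] using this
    · have hj1 : j + 1 < u.length := by
        rcases heven with ⟨a, ha⟩; rcases hje with ⟨b, hb⟩; omega
      rw [getElem_eq_true_of_lyndonWord_take (by omega) hj (hu _ hje.add_one hj1).1]
      simp [hj0, hje]
  · have hnj : ¬ Even j := Nat.not_even_iff_odd.2 hjo
    rcases eq_or_ne (j + 1) u.length with hjL | hjL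
    · obtain ⟨i, rfl⟩ : ∃ i, j = i + 1 := ⟨j - 1, by omega⟩
      have := (hu 1 odd_one (by omega)).2.getElem_eq_true_of_add_one_eq_length (j := i)
        (by simp; omega) (by simp; omega)
      simpa [hjL, Nat.add_comm 1 i] using this
    · rw [getElem_eq_false_of_lyndonWord_drop (by omega) (hu j hjo hj).2]
      simp [hjL, hnj]

theorem eq_of_odd_mem_lyndonSplits {u v : List Bool} (hlen : u.length = v.length)
    (h4 : 4 ≤ u.length) (heven : Even u.length)
    (hu : ∀ p, Odd p → p < u.length → p ∈ lyndonSplits u)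
    (hv : ∀ p, Odd p → p < v.length → p ∈ lyndonSplits v) : u = v := by
  refine List.ext_getElem hlen fun j hju hjv => ?_
  rw [getElem_of_odd_mem_lyndonSplits h4 heven hu j hju,
    getElem_of_odd_mem_lyndonSplits (hlen ▸ h4) (hlen ▸ heven) hv j hjv, hlen]

def zeroOnePow (m : ℕ) : List Bool := (List.replicate m [false, true]).flatten

theorem zeroOnePow_succ (m : ℕ) : zeroOnePow (m + 1) = false :: true :: zeroOnePow m := rfl

theorem zeroOnePow_add (a b : ℕ) : zeroOnePow (a + b) = zeroOnePow a ++ zeroOnePow b := by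
  simp only [zeroOnePow, List.replicate_add, List.flatten_append]

theorem length_zeroOnePow (m : ℕ) : (zeroOnePow m).length = 2 * m := by
  simp [zeroOnePow, mul_comm]

theorem suffix_zeroOnePow {s : List Bool} {m : ℕ} (h : s <:+ zeroOnePow m) :
    (∃ j ≤ m, s = zeroOnePow j) ∨ ∃ j < m, s = true :: zeroOnePow j := by
  induction m with
  | zero => exact .inl ⟨0, le_rfl, List.eq_nil_of_suffix_nil h⟩
  | succ m ih =>
    rw [zeroOnePow_succ] at h
    rcases List.suffix_cons_iff.1 h with rfl | h
    · exact .inl ⟨m + 1, le_rfl, rfl⟩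
    rcases List.suffix_cons_iff.1 h with rfl | h
    · exact .inr ⟨m, m.lt_succ_self, rfl⟩
    rcases ih h with ⟨j, hj, rfl⟩ | ⟨j, hj, rfl⟩
    · exact .inl ⟨j, by omega, rfl⟩
    · exact .inr ⟨j, by omega, rfl⟩

theorem lyndonWord_false_cons_zeroOnePow (k : ℕ) : LyndonWord (false :: zeroOnePow k) := by
  refine ⟨List.cons_ne_nil _ _, fun s hs hne hsu => ?_⟩
  rcases List.suffix_cons_iff.1 hs with rfl | hs
  · exact absurd rfl hsu
  rcases suffix_zeroOnePow hs with ⟨j, hjk, rfl⟩ | ⟨j, -, rfl⟩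
  · obtain ⟨i, rfl⟩ : ∃ i, j = i + 1 := ⟨j - 1, by cases j <;> simp_all [zeroOnePow]⟩
    obtain ⟨k, rfl⟩ : ∃ l, k = l + 1 := ⟨k - 1, by omega⟩
    simp [zeroOnePow_succ, List.cons_lt_cons_iff]
  · simp [List.cons_lt_cons_iff]

theorem lyndonWord_zeroOnePow_append_true (m : ℕ) : LyndonWord (zeroOnePow m ++ [true]) := by
  refine ⟨by simp, fun s hs hne hsu => ?_⟩
  obtain rfl | ⟨t, rfl, ht⟩ := List.suffix_concat_iff.1 hs
  · exact absurd rfl hne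
  rcases suffix_zeroOnePow ht with ⟨j, hjm, rfl⟩ | ⟨j, hjm, rfl⟩
  · obtain ⟨d, rfl⟩ : ∃ d, m = j + (d + 1) := ⟨m - j - 1, by
      rcases hjm.lt_or_eq with hjm | rfl
      · omega
      · exact absurd rfl hsu⟩
    rw [zeroOnePow_add, List.append_assoc]
    exact List.append_left_lt (by simp [zeroOnePow_succ, List.cons_lt_cons_iff])
  · obtain ⟨m, rfl⟩ : ∃ l, m = l + 1 := ⟨m - 1, by omega⟩
    simp [zeroOnePow_succ, List.cons_lt_cons_iff]

theorem false_cons_flatten_replicate (m : ℕ) :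
    false :: (List.replicate m [true, false]).flatten = zeroOnePow m ++ [false] := by
  induction m with
  | zero => rfl
  | succ m ih =>
    rw [List.replicate_succ, List.flatten_cons, zeroOnePow_succ]
    simp [ih]

theorem wordHML_eq_false_cons {n : ℕ} (hn : 2 ≤ n) :
    wordHML n = false :: (zeroOnePow (n - 1) ++ [true]) := by
  obtain ⟨m, rfl⟩ : ∃ m, n = m + 2 := ⟨n - 2, by omega⟩
  calc wordHML (m + 2)
      = false :: ((false :: (List.replicate m [true, false]).flatten) ++ [true, true]) := rfl
    _ = false :: (zeroOnePow (m + 1) ++ [true]) := by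
      rw [false_cons_flatten_replicate, zeroOnePow_add m 1, List.append_assoc, List.append_assoc]
      rfl

theorem length_wordHML {n : ℕ} (hn : 2 ≤ n) : (wordHML n).length = 2 * n := by
  rw [wordHML_eq_false_cons hn]
  simp [length_zeroOnePow]
  omega

theorem odd_mem_lyndonSplits_wordHML {n : ℕ} (hn : 2 ≤ n) {p : ℕ} (hp : Odd p)
    (hpn : p < 2 * n) : p ∈ lyndonSplits (wordHML n) := by
  obtain ⟨k, rfl⟩ := hp
  have hsplit : wordHML n = (false :: zeroOnePow k) ++ (zeroOnePow (n - 1 - k) ++ [true]) := by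
    rw [wordHML_eq_false_cons hn, show n - 1 = k + (n - 1 - k) by omega, zeroOnePow_add]
    simp
  have hlen : (false :: zeroOnePow k).length = 2 * k + 1 := by simp [length_zeroOnePow]
  rw [hsplit, ← hlen]
  exact ⟨List.take_left ▸ lyndonWord_false_cons_zeroOnePow k,
    List.drop_left ▸ lyndonWord_zeroOnePow_append_true _⟩

theorem ncard_lyndonSplits_wordHML {n : ℕ} (hn : 2 ≤ n) :
    (lyndonSplits (wordHML n)).ncard = n := by
  have hS := lyndonSplits_subset_Ioo (wordHML n)
  refine le_antisymm ?_ ?_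
  · have := two_mul_ncard_le_of_add_one_notMem hS fun _ => add_one_notMem_lyndonSplits
    rw [length_wordHML hn] at this
    omega
  · have hodd : (fun k => 2 * k + 1) '' Set.Iio n ⊆ lyndonSplits (wordHML n) := by
      rintro _ ⟨k, hk, rfl⟩
      exact odd_mem_lyndonSplits_wordHML hn (p := 2 * k + 1) (odd_two_mul_add_one k)
        (by simp only [Set.mem_Iio] at hk; omega)
    calc n = ((fun k => 2 * k + 1) '' Set.Iio n).ncard := by
          rw [Set.ncard_image_of_injective _ fun a b h => by simpa using h, Set.ncard_Iio_nat]
      _ ≤ _ := Set.ncard_le_ncard hodd ((Set.finite_Ioo 0 _).subset hS)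

/-- For every n ≥ 3, the shortest binary word with exactly n distinct
factorizations into two Lyndon words is 00(10)^{n-2}11, of length 2n. -/
theorem shortest_word_with_n_lyndon_factorizations (n : ℕ) (hn : 3 ≤ n) :
    (wordHML n).length = 2 * n ∧
    (lyndonFacts (wordHML n)).ncard = n ∧
    (∀ u : List Bool, (lyndonFacts u).ncard = n →
      2 * n ≤ u.length ∧ (u.length = 2 * n → u = wordHML n)) := by
  have hn2 : 2 ≤ n := by omega
  refine ⟨length_wordHML hn2, (ncard_lyndonFacts _).trans (ncard_lyndonSplits_wordHML hn2),
    fun u hu => ?_⟩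
  rw [ncard_lyndonFacts] at hu
  have hS := lyndonSplits_subset_Ioo u
  have hsucc : ∀ p ∈ lyndonSplits u, p + 1 ∉ lyndonSplits u :=
    fun _ => add_one_notMem_lyndonSplits
  refine ⟨hu ▸ two_mul_ncard_le_of_add_one_notMem hS hsucc, fun hlen => ?_⟩
  refine eq_of_odd_mem_lyndonSplits (hlen.trans (length_wordHML hn2).symm) (by omega)
    (hlen ▸ even_two_mul n) ?_ ?_
  · exact fun p hp hpu => odd_mem_of_two_mul_ncard_eq hS hsucc (by omega) hp hpu
  · rw [length_wordHML hn2]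
    exact fun p hp hpu => odd_mem_lyndonSplits_wordHML hn2 hp hpu
end
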